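/- For every ε > 0 and s > 0, the superdifferential of u_ε at the point (s,0) is D⁺u_ε(s,0) = {−1/(2(s+ε)²)} × [−1/(s+ε), 1/(s+ε)], i.e. (τ,p) ∈ D⁺u_ε(s,0) if and only if τ = −1/(2(s+ε)²) and |p| ≤ 1/(s+ε). -/

import Mathlib

open Filter Topology Set

noncomputable section

/-- `u_ε(t,x) = (|x| − 1)²/(2(t + ε))`. -/
def uEps (ε : ℝ) (X : ℝ × ℝ) : ℝ := (|X.2| - 1) ^ 2 / (2 * (X.1 + ε))

/-- Superdifferential of `w : ℝ × ℝ → ℝ` at `X` (with the Euclidean norm on `ℝ²`):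
`P ∈ D⁺w(X)` iff `limsup_{Y→X} (w(Y)−w(X)−⟨P,Y−X⟩)/|Y−X| ≤ 0`. -/
def superDiff2 (w : ℝ × ℝ → ℝ) (X P : ℝ × ℝ) : Prop :=
  ∀ ε > 0, ∀ᶠ Y in 𝓝[≠] X,
    w Y - w X - (P.1 * (Y.1 - X.1) + P.2 * (Y.2 - X.2)) ≤
      ε * Real.sqrt ((Y.1 - X.1) ^ 2 + (Y.2 - X.2) ^ 2)

/-
At `(s, 0)` the function `u_ε` is smooth in `t` but has a concave kink `-|x|/(s+ε)` in `x`.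
Restricting a superdifferential to the `t`-line forces `τ` to be the `t`-derivative
`-1/(2(s+ε)²)`, and restricting it to the `x`-line forces `|p| ≤ 1/(s+ε)`. Conversely, for such
`(τ, p)` the first-order remainder is bounded by the perfect square
`((s+ε)|x| + (t-s))² / (2(s+ε)²(t+ε))`, which is quadratically small near `(s, 0)`.
-/

lemma abs_le_of_eventually_mul_le {c b : ℝ} (h : ∀ᶠ x in 𝓝[≠] (0 : ℝ), c * x ≤ b * |x|) :
    |c| ≤ b := by
  obtain ⟨x, hx, hx0⟩ := ((h.filter_mono (nhdsGT_le_nhdsNE 0)).and self_mem_nhdsWithin).exists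
  obtain ⟨y, hy, hy0⟩ := ((h.filter_mono (nhdsLT_le_nhdsNE 0)).and self_mem_nhdsWithin).exists
  rw [abs_of_pos hx0] at hx
  rw [abs_of_neg hy0] at hy
  exact abs_le.2 ⟨by nlinarith, by nlinarith⟩

lemma HasDerivAt.eq_of_forall_eventually_sub_le {g : ℝ → ℝ} {g' τ s : ℝ}
    (hg : HasDerivAt g g' s)
    (h : ∀ δ > 0, ∀ᶠ x in 𝓝[≠] (0 : ℝ), g (s + x) - g s - τ * x ≤ δ * |x|) : τ = g' := by
  have key : ∀ δ > 0, |g' - τ| ≤ 2 * δ := fun δ hδ => by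
    have hlo := (hasDerivAt_iff_isLittleO_nhds_zero.1 hg).def hδ
    refine abs_le_of_eventually_mul_le ?_
    filter_upwards [h δ hδ, nhdsWithin_le_nhds hlo] with x hup hlo
    rw [Real.norm_eq_abs, Real.norm_eq_abs, smul_eq_mul] at hlo
    linarith [neg_abs_le (g (s + x) - g s - x * g')]
  have : |g' - τ| ≤ 0 := le_of_forall_pos_le_add fun δ hδ => by
    linarith [key (δ / 2) (half_pos hδ)]
  linarith [abs_nonpos_iff.1 this]

namespace superDiff2

variable {w : ℝ × ℝ → ℝ} {X P : ℝ × ℝ}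

lemma eventually_fst (hP : superDiff2 w X P) {δ : ℝ} (hδ : 0 < δ) :
    ∀ᶠ h in 𝓝[≠] (0 : ℝ), w (X.1 + h, X.2) - w X - P.1 * h ≤ δ * |h| := by
  have hγ : Tendsto (fun h : ℝ => (X.1 + h, X.2)) (𝓝[≠] (0 : ℝ)) (𝓝[≠] X) := by
    refine tendsto_nhdsWithin_iff.2 ⟨tendsto_nhdsWithin_of_tendsto_nhds ?_, ?_⟩
    · have hc : Continuous fun h : ℝ => (X.1 + h, X.2) := by fun_prop
      simpa using hc.tendsto 0
    · filter_upwards [self_mem_nhdsWithin] with h hh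
      simpa [Prod.ext_iff] using hh
  filter_upwards [hγ.eventually (hP δ hδ)] with h hh
  simpa [Real.sqrt_sq_eq_abs] using hh

lemma eventually_snd (hP : superDiff2 w X P) {δ : ℝ} (hδ : 0 < δ) :
    ∀ᶠ h in 𝓝[≠] (0 : ℝ), w (X.1, X.2 + h) - w X - P.2 * h ≤ δ * |h| := by
  have hγ : Tendsto (fun h : ℝ => (X.1, X.2 + h)) (𝓝[≠] (0 : ℝ)) (𝓝[≠] X) := by
    refine tendsto_nhdsWithin_iff.2 ⟨tendsto_nhdsWithin_of_tendsto_nhds ?_, ?_⟩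
    · have hc : Continuous fun h : ℝ => (X.1, X.2 + h) := by fun_prop
      simpa using hc.tendsto 0
    · filter_upwards [self_mem_nhdsWithin] with h hh
      simpa [Prod.ext_iff] using hh
  filter_upwards [hγ.eventually (hP δ hδ)] with h hh
  simpa [Real.sqrt_sq_eq_abs] using hh

end superDiff2

lemma superDiff2_of_eventually_le_mul_sq {w : ℝ × ℝ → ℝ} {X P : ℝ × ℝ} (C : ℝ)
    (h : ∀ᶠ Y in 𝓝 X, w Y - w X - (P.1 * (Y.1 - X.1) + P.2 * (Y.2 - X.2)) ≤
      C * ((Y.1 - X.1) ^ 2 + (Y.2 - X.2) ^ 2)) :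
    superDiff2 w X P := by
  intro δ hδ
  have hdist : Tendsto (fun Y : ℝ × ℝ => C * Real.sqrt ((Y.1 - X.1) ^ 2 + (Y.2 - X.2) ^ 2))
      (𝓝 X) (𝓝 0) := by
    have : Continuous fun Y : ℝ × ℝ => C * Real.sqrt ((Y.1 - X.1) ^ 2 + (Y.2 - X.2) ^ 2) := by
      fun_prop
    simpa using this.tendsto X
  refine nhdsWithin_le_nhds ?_
  filter_upwards [h, (tendsto_order.1 hdist).2 δ hδ] with Y hY hsmall
  set q := (Y.1 - X.1) ^ 2 + (Y.2 - X.2) ^ 2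
  calc _ ≤ C * q := hY
    _ = C * Real.sqrt q * Real.sqrt q := by rw [mul_assoc, Real.mul_self_sqrt (by positivity)]
    _ ≤ δ * Real.sqrt q := by gcongr

lemma uEps_zero_sub_abs_div_le (ε t x : ℝ) (ht : 0 < t + ε) :
    uEps ε (t, 0) - |x| / (t + ε) ≤ uEps ε (t, x) := by
  have hgap : uEps ε (t, x) - (uEps ε (t, 0) - |x| / (t + ε)) = x ^ 2 / (2 * (t + ε)) := by
    simp only [uEps, abs_zero]
    rw [← sq_abs x]
    field_simp
    ring
  exact sub_nonneg.1 (hgap ▸ by positivity)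

lemma hasDerivAt_uEps_zero (ε s : ℝ) (hs : 0 < s + ε) :
    HasDerivAt (fun t => uEps ε (t, 0)) (-1 / (2 * (s + ε) ^ 2)) s := by
  have hfun : (fun t => uEps ε (t, 0)) = fun t => (2 * (t + ε))⁻¹ := by
    ext t; simp [uEps]
  rw [hfun]
  refine ((((hasDerivAt_id' s).add_const ε).const_mul 2).fun_inv (by positivity)).congr_deriv ?_
  field_simp

lemma uEps_sub_uEps_add_eq_sq_div (ε s t x : ℝ) (hs : s + ε ≠ 0) (ht : t + ε ≠ 0) :
    uEps ε (t, x) - uEps ε (s, 0) + (t - s) / (2 * (s + ε) ^ 2) + |x| / (s + ε) =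
      ((s + ε) * |x| + (t - s)) ^ 2 / (2 * (s + ε) ^ 2 * (t + ε)) := by
  simp only [uEps, abs_zero]
  field_simp
  ring

lemma uEps_sub_le_mul_sq (ε s t x p : ℝ) (hs : 0 < s + ε) (ht : (s + ε) / 2 < t + ε)
    (hp : |p| ≤ 1 / (s + ε)) :
    uEps ε (t, x) - uEps ε (s, 0) - (-1 / (2 * (s + ε) ^ 2) * (t - s) + p * (x - 0)) ≤
      2 * ((s + ε) ^ 2 + 1) / (s + ε) ^ 3 * ((t - s) ^ 2 + (x - 0) ^ 2) := by
  have hpx : -(p * x) ≤ |x| / (s + ε) := by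
    calc -(p * x) ≤ |p| * |x| := by rw [← abs_mul]; exact neg_le_abs _
      _ ≤ 1 / (s + ε) * |x| := by gcongr
      _ = |x| / (s + ε) := by ring
  have hsq : ((s + ε) * |x| + (t - s)) ^ 2 ≤ 2 * ((s + ε) ^ 2 + 1) * ((t - s) ^ 2 + x ^ 2) := by
    nlinarith [sq_nonneg ((s + ε) * |x| - (t - s)), sq_abs x, sq_nonneg (t - s),
      sq_nonneg (s + ε), sq_nonneg x]
  calc _ ≤ uEps ε (t, x) - uEps ε (s, 0) + (t - s) / (2 * (s + ε) ^ 2) + |x| / (s + ε) := by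
        have : -1 / (2 * (s + ε) ^ 2) * (t - s) = -((t - s) / (2 * (s + ε) ^ 2)) := by ring
        rw [sub_zero, this]
        linarith
    _ = ((s + ε) * |x| + (t - s)) ^ 2 / (2 * (s + ε) ^ 2 * (t + ε)) :=
        uEps_sub_uEps_add_eq_sq_div ε s t x hs.ne' (by linarith)
    _ ≤ ((s + ε) * |x| + (t - s)) ^ 2 / (s + ε) ^ 3 := by
        gcongr
        nlinarith
    _ ≤ 2 * ((s + ε) ^ 2 + 1) / (s + ε) ^ 3 * ((t - s) ^ 2 + (x - 0) ^ 2) := by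
        rw [sub_zero, div_mul_eq_mul_div]
        gcongr

lemma abs_le_of_superDiff2_uEps {ε s τ p : ℝ} (hs : 0 < s + ε)
    (hP : superDiff2 (uEps ε) (s, 0) (τ, p)) : |p| ≤ 1 / (s + ε) := by
  refine le_of_forall_pos_le_add fun δ hδ => ?_
  rw [← abs_neg]
  refine abs_le_of_eventually_mul_le ?_
  filter_upwards [hP.eventually_snd hδ] with h hh
  have hkink := uEps_zero_sub_abs_div_le ε s h hs
  rw [zero_add] at hh
  have : 1 / (s + ε) * |h| = |h| / (s + ε) := by ring
  linarith

lemma superDiff2_uEps {ε s p : ℝ} (hs : 0 < s + ε) (hp : |p| ≤ 1 / (s + ε)) :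
    superDiff2 (uEps ε) (s, 0) (-1 / (2 * (s + ε) ^ 2), p) := by
  refine superDiff2_of_eventually_le_mul_sq (2 * ((s + ε) ^ 2 + 1) / (s + ε) ^ 3) ?_
  have hnear : ∀ᶠ Y : ℝ × ℝ in 𝓝 (s, 0), (s + ε) / 2 < Y.1 + ε :=
    ((continuous_fst.add continuous_const).tendsto (s, 0)).eventually_const_lt (half_lt_self hs)
  filter_upwards [hnear] with ⟨t, x⟩ ht
  exact uEps_sub_le_mul_sq ε s t x p hs ht hp

/-- for every `ε > 0` and `s > 0`,
`D⁺u_ε(s,0) = {−1/(2(s+ε)²)} × [−1/(s+ε), 1/(s+ε)]`. -/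
theorem statement18 (ε : ℝ) (hε : 0 < ε) (s : ℝ) (hs : 0 < s) (τ p : ℝ) :
    superDiff2 (uEps ε) (s, 0) (τ, p) ↔
      τ = -1 / (2 * (s + ε) ^ 2) ∧ |p| ≤ 1 / (s + ε) := by
  have ha : 0 < s + ε := by linarith
  constructor
  · intro hP
    exact ⟨(hasDerivAt_uEps_zero ε s ha).eq_of_forall_eventually_sub_le
      fun δ hδ => hP.eventually_fst hδ, abs_le_of_superDiff2_uEps ha hP⟩
  · rintro ⟨rfl, hp⟩
    exact superDiff2_uEps ha hp
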